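/- The map η̌ : S_X → ℝ defined by η̌(y) = inf_{ε>0} sup{‖I − f⊗y‖ : f ∈ (1+ε)B_{X*}, f(y) = 1} is upper semicontinuous on the unit sphere of any Banach space X. -/

import Mathlib

open ContinuousLinearMap in
private lemma sset_bddAbove {X : Type*} [NormedAddCommGroup X] [NormedSpace ℝ X] (ε : ℝ) (y : X) :
    BddAbove {r : ℝ | ∃ f : X →L[ℝ] ℝ, ‖f‖ ≤ 1 + ε ∧ f y = 1 ∧
      ‖ContinuousLinearMap.id ℝ X - f.smulRight y‖ = r} := by
  refine ⟨1 + (1 + ε) * ‖y‖, ?_⟩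
  rintro r ⟨f, hf, -, rfl⟩
  have h1 : ‖(ContinuousLinearMap.id ℝ X : X →L[ℝ] X)‖ ≤ 1 := norm_id_le
  have h2 : ‖f.smulRight y‖ = ‖f‖ * ‖y‖ := f.norm_smulRight_apply y
  have h3 : ‖f‖ * ‖y‖ ≤ (1 + ε) * ‖y‖ :=
    mul_le_mul_of_nonneg_right hf (norm_nonneg y)
  calc ‖ContinuousLinearMap.id ℝ X - f.smulRight y‖
      ≤ ‖ContinuousLinearMap.id ℝ X‖ + ‖f.smulRight y‖ := norm_sub_le _ _
    _ ≤ 1 + (1 + ε) * ‖y‖ := by rw [h2]; linarith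

private lemma sset_nonempty {X : Type*} [NormedAddCommGroup X] [NormedSpace ℝ X]
    [CompleteSpace X] {ε : ℝ} (hε : 0 ≤ ε) {y : X} (hy : ‖y‖ = 1) :
    {r : ℝ | ∃ f : X →L[ℝ] ℝ, ‖f‖ ≤ 1 + ε ∧ f y = 1 ∧
      ‖ContinuousLinearMap.id ℝ X - f.smulRight y‖ = r}.Nonempty := by
  obtain ⟨g, hg, hgy⟩ := exists_dual_vector ℝ y (by simp [← norm_ne_zero_iff, hy])
  exact ⟨_, g, by rw [hg]; linarith, by simpa [hy] using hgy, rfl⟩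

private lemma sset_nonneg {X : Type*} [NormedAddCommGroup X] [NormedSpace ℝ X] (ε : ℝ) (y : X) :
    0 ≤ sSup {r : ℝ | ∃ f : X →L[ℝ] ℝ, ‖f‖ ≤ 1 + ε ∧ f y = 1 ∧
      ‖ContinuousLinearMap.id ℝ X - f.smulRight y‖ = r} :=
  Real.sSup_nonneg fun r hr => by obtain ⟨f, -, -, rfl⟩ := hr; exact norm_nonneg _

/-- `η̌(y) = inf_{ε>0} sup{‖I − f⊗y‖ : ‖f‖ ≤ 1+ε, f(y) = 1}`. -/
noncomputable def etaCheck {X : Type*} [NormedAddCommGroup X] [NormedSpace ℝ X] (y : X) : ℝ :=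
  ⨅ ε : Set.Ioi (0 : ℝ), sSup {r : ℝ | ∃ f : X →L[ℝ] ℝ, ‖f‖ ≤ 1 + (ε : ℝ) ∧ f y = 1 ∧
    ‖ContinuousLinearMap.id ℝ X - f.smulRight y‖ = r}

open ContinuousLinearMap

theorem stmt_6 {X : Type*} [NormedAddCommGroup X] [NormedSpace ℝ X] [CompleteSpace X] :
    UpperSemicontinuousOn (etaCheck (X := X)) (Metric.sphere (0 : X) 1) := by
  intro y₀ hy₀ c hc
  haveI : Nonempty (Set.Ioi (0 : ℝ)) := ⟨⟨1, by norm_num⟩⟩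
  have hy₀n : ‖y₀‖ = 1 := by simpa using hy₀
  rw [etaCheck] at hc
  obtain ⟨⟨ε, hεmem⟩, hSc⟩ := exists_lt_of_ciInf_lt hc
  have hε : (0 : ℝ) < ε := hεmem
  set S := sSup {r : ℝ | ∃ f : X →L[ℝ] ℝ, ‖f‖ ≤ 1 + ε ∧ f y₀ = 1 ∧
    ‖ContinuousLinearMap.id ℝ X - f.smulRight y₀‖ = r} with hSdef
  have hSc : S < c := hSc
  set K := 1 + ε / 2 with hKdef
  have hKpos : (0 : ℝ) < K := by rw [hKdef]; linarith
  have hcS : 0 < c - S := by linarith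
  set δ := min (ε / 2 / ((1 + ε) * K)) ((c - S) / (4 * K ^ 2 + 2 * K)) with hδdef
  have hδpos : 0 < δ := lt_min (by positivity) (by positivity)
  have hδ1 : δ ≤ ε / 2 / ((1 + ε) * K) := min_le_left _ _
  have hδ2 : δ ≤ (c - S) / (4 * K ^ 2 + 2 * K) := min_le_right _ _
  have hKne : K ≠ 0 := ne_of_gt hKpos
  have h4K : 4 * K ^ 2 + 2 * K ≠ 0 := by positivity
  clear_value S K δ
  filter_upwards [inter_mem_nhdsWithin (Metric.sphere (0 : X) 1)
    (Metric.ball_mem_nhds y₀ hδpos)] with y hy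
  obtain ⟨hysph, hyball⟩ := hy
  have hyn : ‖y‖ = 1 := by simpa using hysph
  have hdist : ‖y - y₀‖ < δ := by rwa [Metric.mem_ball, dist_eq_norm] at hyball
  have hKδ : K * δ ≤ ε / 2 / (1 + ε) := by
    have h := mul_le_mul_of_nonneg_left hδ1 hKpos.le
    have heq : K * (ε / 2 / ((1 + ε) * K)) = ε / 2 / (1 + ε) := by
      field_simp
    linarith [h, heq.le, heq.ge]
  have hKδhalf : K * δ < 1 / 2 := by
    have : ε / 2 / (1 + ε) < 1 / 2 := by
      rw [div_lt_div_iff₀ (by linarith) (by norm_num)]; linarith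
    linarith
  -- the target sup for parameter ε/2
  have hεhalf : (0 : ℝ) < ε / 2 := by linarith
  have hbound : ∀ r ∈ {r : ℝ | ∃ f : X →L[ℝ] ℝ, ‖f‖ ≤ 1 + ε / 2 ∧ f y = 1 ∧
      ‖ContinuousLinearMap.id ℝ X - f.smulRight y‖ = r}, r ≤ S + (c - S) / 2 := by
    rintro r ⟨f, hf, hfy, rfl⟩
    have hfK : ‖f‖ ≤ K := by rw [hKdef]; exact hf
    -- f y₀ near 1
    have hay : |f y₀ - 1| ≤ K * δ := by
      have h1 : f y₀ - 1 = f (y₀ - y) := by rw [map_sub, hfy]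
      rw [h1, ← Real.norm_eq_abs]
      calc ‖f (y₀ - y)‖ ≤ ‖f‖ * ‖y₀ - y‖ := f.le_opNorm _
        _ ≤ K * δ := by
            rw [norm_sub_rev]
            exact mul_le_mul hfK hdist.le (norm_nonneg _) hKpos.le
    obtain ⟨hayl, hayr⟩ := abs_le.mp hay
    have ha2 : (1 : ℝ) / 2 < f y₀ := by linarith
    have hapos : (0 : ℝ) < f y₀ := by linarith
    have hane : f y₀ ≠ 0 := ne_of_gt hapos
    have hinvpos : (0 : ℝ) < (f y₀)⁻¹ := inv_pos.mpr hapos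
    have hainv : f y₀ * (f y₀)⁻¹ = 1 := mul_inv_cancel₀ hane
    have hinv2 : (f y₀)⁻¹ ≤ 2 := by
      have h := inv_anti₀ (by norm_num : (0:ℝ) < 1 / 2) ha2.le
      norm_num at h
      exact h
    set g := (f y₀)⁻¹ • f with hgdef
    have hg_y₀ : g y₀ = 1 := by
      simp only [hgdef, ContinuousLinearMap.smul_apply, smul_eq_mul]
      exact inv_mul_cancel₀ hane
    have hprod : (1 + ε) * (K * δ) ≤ ε / 2 := by
      have h := mul_le_mul_of_nonneg_left hKδ (by linarith : (0:ℝ) ≤ 1 + ε)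
      have heq : (1 + ε) * (ε / 2 / (1 + ε)) = ε / 2 := by field_simp
      linarith
    have hgnorm : ‖g‖ ≤ 1 + ε := by
      have h1 : ‖g‖ = (f y₀)⁻¹ * ‖f‖ := by
        rw [hgdef, norm_smul ((f y₀)⁻¹) f, Real.norm_eq_abs, abs_of_pos hinvpos]
      have h2 : ‖f‖ ≤ (1 + ε) * f y₀ := by
        have hgap : 1 - f y₀ ≤ K * δ := by linarith
        have hx : (1 + ε) * (1 - f y₀) ≤ ε / 2 :=
          le_trans (mul_le_mul_of_nonneg_left hgap (by linarith)) hprod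
        have hexp : (1 + ε) * (1 - f y₀) = (1 + ε) - (1 + ε) * f y₀ := by ring
        have hKle : (1:ℝ) + ε / 2 ≤ (1 + ε) * f y₀ := by linarith
        exact hfK.trans (hKdef ▸ hKle)
      rw [h1]
      calc (f y₀)⁻¹ * ‖f‖ ≤ (f y₀)⁻¹ * ((1 + ε) * f y₀) :=
            mul_le_mul_of_nonneg_left h2 hinvpos.le
        _ = 1 + ε := by field_simp
    have hgS : ‖ContinuousLinearMap.id ℝ X - g.smulRight y₀‖ ≤ S := by
      rw [hSdef]
      exact le_csSup (sset_bddAbove ε y₀) ⟨g, hgnorm, hg_y₀, rfl⟩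
    -- decomposition
    have hsplit : ContinuousLinearMap.id ℝ X - f.smulRight y
        = (ContinuousLinearMap.id ℝ X - g.smulRight y₀)
          + ((g - f).smulRight y₀ + f.smulRight (y₀ - y)) := by
      ext z
      simp only [ContinuousLinearMap.add_apply, ContinuousLinearMap.sub_apply,
        ContinuousLinearMap.smulRight_apply, ContinuousLinearMap.id_apply,
        ContinuousLinearMap.coe_sub', Pi.sub_apply, sub_smul, smul_sub]
      abel
    -- norm estimates for the two error terms
    have herr1 : ‖(g - f).smulRight y₀‖ ≤ 2 * K ^ 2 * δ := by
      have hgf : g - f = ((f y₀)⁻¹ - 1) • f := by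
        rw [hgdef]
        ext z
        simp only [ContinuousLinearMap.sub_apply, ContinuousLinearMap.smul_apply, smul_eq_mul]
        ring
      have h1 : ‖(g - f).smulRight y₀‖ = ‖g - f‖ * ‖y₀‖ := norm_smulRight_apply _ _
      have h2 : ‖g - f‖ = |(f y₀)⁻¹ - 1| * ‖f‖ := by
        rw [hgf, norm_smul ((f y₀)⁻¹ - 1) f, Real.norm_eq_abs]
      have h3 : |(f y₀)⁻¹ - 1| = |1 - f y₀| * (f y₀)⁻¹ := by
        have hid : (f y₀)⁻¹ - 1 = (1 - f y₀) * (f y₀)⁻¹ := by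
          rw [sub_mul, one_mul, hainv]
        rw [hid, abs_mul, abs_of_pos hinvpos]
      have h4 : |1 - f y₀| ≤ K * δ := by rwa [abs_sub_comm] at hay
      rw [h1, hy₀n, mul_one, h2, h3]
      have hA : |1 - f y₀| * (f y₀)⁻¹ ≤ K * δ * 2 :=
        mul_le_mul h4 hinv2 hinvpos.le (by positivity)
      calc |1 - f y₀| * (f y₀)⁻¹ * ‖f‖ ≤ K * δ * 2 * K :=
            mul_le_mul hA hfK (norm_nonneg f) (by positivity)
        _ = 2 * K ^ 2 * δ := by ring
    have herr2 : ‖f.smulRight (y₀ - y)‖ ≤ K * δ := by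
      rw [norm_smulRight_apply, norm_sub_rev]
      exact mul_le_mul hfK hdist.le (norm_nonneg _) hKpos.le
    have hδfin : 2 * K ^ 2 * δ + K * δ ≤ (c - S) / 2 := by
      have h := mul_le_mul_of_nonneg_left hδ2 (by positivity : (0:ℝ) ≤ 2 * K ^ 2 + K)
      have heq : (2 * K ^ 2 + K) * ((c - S) / (4 * K ^ 2 + 2 * K)) = (c - S) / 2 := by
        field_simp
        ring
      have hexp : (2 * K ^ 2 + K) * δ = 2 * K ^ 2 * δ + K * δ := by ring
      linarith
    calc ‖ContinuousLinearMap.id ℝ X - f.smulRight y‖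
        ≤ ‖ContinuousLinearMap.id ℝ X - g.smulRight y₀‖
          + (‖(g - f).smulRight y₀‖ + ‖f.smulRight (y₀ - y)‖) := by
          rw [hsplit]
          exact (norm_add_le _ _).trans (by gcongr; exact norm_add_le _ _)
      _ ≤ S + (c - S) / 2 := by linarith
  have hT : sSup {r : ℝ | ∃ f : X →L[ℝ] ℝ, ‖f‖ ≤ 1 + ε / 2 ∧ f y = 1 ∧
      ‖ContinuousLinearMap.id ℝ X - f.smulRight y‖ = r} ≤ S + (c - S) / 2 :=
    csSup_le (sset_nonempty hεhalf.le hyn) hbound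
  have h1 : etaCheck y ≤ sSup {r : ℝ | ∃ f : X →L[ℝ] ℝ, ‖f‖ ≤ 1 + ε / 2 ∧ f y = 1 ∧
      ‖ContinuousLinearMap.id ℝ X - f.smulRight y‖ = r} := by
    rw [etaCheck]
    have hbb : BddBelow (Set.range fun ε : Set.Ioi (0 : ℝ) =>
        sSup {r : ℝ | ∃ f : X →L[ℝ] ℝ, ‖f‖ ≤ 1 + (ε : ℝ) ∧ f y = 1 ∧
          ‖ContinuousLinearMap.id ℝ X - f.smulRight y‖ = r}) := by
      refine ⟨0, ?_⟩
      rintro _ ⟨e, rfl⟩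
      exact sset_nonneg _ _
    exact ciInf_le hbb ⟨ε / 2, hεhalf⟩
  calc etaCheck y ≤ S + (c - S) / 2 := h1.trans hT
    _ < c := by linarith
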